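/- arXiv:1112.0817 — 6 statements merged into one kernel-verified Lean document; each statement's English description precedes it below -/
import Mathlib

section
/- Let (X,τ) be a non-compact, locally compact Hausdorff topological space. Then every subset of X closed with respect to τ is compact with respect to the de Groot dual topology τ^G. -/
/-!
An ultrafilter on `C` that contains a compact set `K` converges in the original topology to a
point of the compact set `K ∩ C`, hence also in the dual topology, which is coarser because
compact sets are closed. An ultrafilter containing no compact set contains the complement of
each of them, i.e. every subbasic open set of the dual topology, so it converges in the dual
topology to every point.
-/

open Topology Set

/-- A set is saturated if it is the intersection of the open sets containing it. -/
def Saturated {X : Type*} (t : TopologicalSpace X) (A : Set X) : Prop :=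
  A = ⋂₀ {U : Set X | t.IsOpen U ∧ A ⊆ U}

/-- The de Groot dual (co-compact) topology: generated by taking all compact
saturated subsets of `(X, t)` as a subbase for the closed sets. -/
def deGrootDual {X : Type*} (t : TopologicalSpace X) : TopologicalSpace X :=
  TopologicalSpace.generateFrom
    {U : Set X | ∃ K : Set X, @IsCompact X t K ∧ Saturated t K ∧ U = Kᶜ}

open Filter

section

variable {X : Type*} [t : TopologicalSpace X]

theorem le_deGrootDual [T2Space X] : t ≤ deGrootDual t := by
  refine le_generateFrom ?_
  rintro U ⟨K, hK, -, rfl⟩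
  exact hK.isClosed.isOpen_compl

theorem Ultrafilter.le_nhds_deGrootDual_of_forall_isCompact_notMem (F : Ultrafilter X)
    (hF : ∀ K, IsCompact K → K ∉ F) (x : X) : (F : Filter X) ≤ @nhds X (deGrootDual t) x := by
  rw [deGrootDual, TopologicalSpace.nhds_generateFrom]
  refine le_iInf₂ fun U hU => ?_
  obtain ⟨-, K, hK, -, rfl⟩ := hU
  exact le_principal_iff.mpr (Ultrafilter.compl_mem_iff_notMem.mpr (hF K hK))

end

theorem isCompact_deGrootDual_of_isClosed_general {X : Type*} (t : TopologicalSpace X)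
    (h2 : @T2Space X t)
    (C : Set X) (hC : @IsClosed X t C) :
    @IsCompact X (deGrootDual t) C := by
  let := t
  rw [@isCompact_iff_ultrafilter_le_nhds X (deGrootDual t) C]
  intro F hFC
  have hCF : C ∈ F := le_principal_iff.mp hFC
  by_cases hcompact : ∃ K, IsCompact K ∧ K ∈ F
  · obtain ⟨K, hK, hKF⟩ := hcompact
    obtain ⟨x, hx, hFx⟩ :=
      (hK.inter_right hC).ultrafilter_le_nhds F (le_principal_iff.mpr (inter_mem hKF hCF))
    exact ⟨x, hx.2, hFx.trans (nhds_mono le_deGrootDual)⟩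
  · push Not at hcompact
    obtain ⟨x, hx⟩ := Filter.nonempty_of_mem hCF
    exact ⟨x, hx, F.le_nhds_deGrootDual_of_forall_isCompact_notMem hcompact x⟩

/-- In a non-compact, locally compact Hausdorff space, every closed set is
compact with respect to the de Groot dual topology. -/
theorem isCompact_deGrootDual_of_isClosed {X : Type*} (t : TopologicalSpace X)
    (h2 : @T2Space X t) (hlc : @LocallyCompactSpace X t) (hnc : ¬ @CompactSpace X t)
    (C : Set X) (hC : @IsClosed X t C) :
    @IsCompact X (deGrootDual t) C :=
  isCompact_deGrootDual_of_isClosed_general t h2 C hC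
end

section
/- Let (X,τ) be a locally compact Hausdorff topological space. Then for every compact subset K of (X,τ), the subspace topologies induced on K by τ and by the de Groot dual topology τ^G coincide. -/
open Topology Set

/-! In a Hausdorff space every set is saturated and every compact set is closed, so `τ^G` is
coarser than `τ`. Conversely, a relatively closed subset of a compact `K` is compact, hence
closed for `τ^G`; so the two topologies have the same closed sets inside `K`. -/

namespace deGrootDual

variable {X : Type*} [t : TopologicalSpace X]

theorem saturated_of_t1Space [T1Space X] (A : Set X) : Saturated t A :=
  (nhdsKer_eq_of_t1Space A).symm.trans (nhdsKer_def A)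

theorem isOpen_compl_of_isCompact [T1Space X] {C : Set X} (hC : IsCompact C) :
    IsOpen[deGrootDual t] Cᶜ :=
  .basic _ ⟨C, hC, saturated_of_t1Space C, rfl⟩

theorem le_deGrootDual [T2Space X] : t ≤ deGrootDual t :=
  le_generateFrom fun _ ⟨_, hC, _, hU⟩ ↦ hU ▸ hC.isClosed.isOpen_compl

theorem induced_deGrootDual_le_of_isCompact [T2Space X] {K : Set X} (hK : IsCompact K) :
    TopologicalSpace.induced ((↑) : K → X) (deGrootDual t) ≤
      TopologicalSpace.induced ((↑) : K → X) t := by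
  rintro _ ⟨U, hU, rfl⟩
  refine ⟨(K ∩ Uᶜ)ᶜ, isOpen_compl_of_isCompact (hK.inter_right hU.isClosed_compl), ?_⟩
  ext
  simp

end deGrootDual

theorem deGrootDual_induced_eq_on_compact_general {X : Type*} (t : TopologicalSpace X)
    (h2 : @T2Space X t)
    (K : Set X) (hK : @IsCompact X t K) :
    TopologicalSpace.induced (Subtype.val : K → X) t =
      TopologicalSpace.induced (Subtype.val : K → X) (deGrootDual t) :=
  le_antisymm (induced_mono deGrootDual.le_deGrootDual)
    (deGrootDual.induced_deGrootDual_le_of_isCompact hK)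

/-- In a locally compact Hausdorff space, the original topology and the de Groot
dual topology induce the same subspace topology on every compact subset. -/
theorem deGrootDual_induced_eq_on_compact {X : Type*} (t : TopologicalSpace X)
    (h2 : @T2Space X t) (hlc : @LocallyCompactSpace X t)
    (K : Set X) (hK : @IsCompact X t K) :
    TopologicalSpace.induced (Subtype.val : K → X) t =
      TopologicalSpace.induced (Subtype.val : K → X) (deGrootDual t) :=
  deGrootDual_induced_eq_on_compact_general t h2 K hK
end

section
/- Let (P,π) be a framework and define x ~ y iff π(x) = π(y), where π(x) = {U ∈ π : x ∈ U}. Then the double dual framework (P^dd, π^dd) is isomorphic to the quotient framework (P_~, g(π)), where g : P → P_~ is the quotient map. -/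
open Set

universe u

/-- A framework: a set of places together with a framology, a family of subsets. -/
structure Framework where
  P : Type u
  pi : Set (Set P)

/-- The set of members of the framology containing a given place. -/
def Framework.pt (F : Framework) (x : F.P) : Set F.pi :=
  {U : F.pi | x ∈ (U : Set F.P)}

/-- The dual framework: places are the members of the framology, and the
framology consists of the sets `pt x = {U ∈ π | x ∈ U}` for `x ∈ P`. -/
def Framework.dual (F : Framework) : Framework :=
  ⟨F.pi, Set.range F.pt⟩

/-- A framework is T0 if distinct places are separated by a member of the framology. -/
def Framework.T0 (F : Framework) : Prop :=
  ∀ x y : F.P, x ≠ y → ∃ U ∈ F.pi, Xor' (x ∈ U) (y ∈ U)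

/-- A framework isomorphism: a bijection of places whose image map carries the
framology of the source onto the framology of the target (hence its inverse is
also a framework morphism). -/
def Framework.Iso (F G : Framework) : Prop :=
  ∃ f : F.P → G.P, Function.Bijective f ∧ (Set.image f) '' F.pi = G.pi

/-- The quotient framework of `F` by the equivalence `x ~ y ↔ π(x) = π(y)`. -/
def Framework.ptQuotient (F : Framework) : Framework :=
  let s : Setoid F.P := ⟨fun x y => F.pt x = F.pt y,
    ⟨fun _ => rfl, Eq.symm, Eq.trans⟩⟩
  ⟨Quotient s, (Set.image (Quotient.mk s)) '' F.pi⟩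

/-! The places of the double dual are the sets `π(x)`, so `x ↦ π(x)` descends to a bijection
from `P_~` onto them. It sends the image of `U ∈ π` in `P_~` to `{π(x) | x ∈ U} = {A | U ∈ A}`,
which is the point of `U` in the double dual. -/

namespace Framework

theorem Iso.symm {F G : Framework} (h : F.Iso G) : G.Iso F := by
  obtain ⟨f, hf, hπ⟩ := h
  let e := Equiv.ofBijective f hf
  refine ⟨e.symm, e.symm.bijective, ?_⟩
  have hcancel : ∀ s, e.symm '' (f '' s) = s := e.symm_image_image
  rw [← hπ, Set.image_image]
  simp only [hcancel, Set.image_id']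

theorem ptQuotient_eq_quotient_ker (F : Framework) :
    F.ptQuotient = ⟨Quotient (Setoid.ker F.pt), Set.image (Quotient.mk _) '' F.pi⟩ :=
  rfl

theorem image_rangeFactorization_pt (F : Framework) (U : F.pi) :
    Set.rangeFactorization F.pt '' U = F.dual.pt U := by
  ext ⟨_, x, rfl⟩
  constructor
  · rintro ⟨y, hy, hxy⟩
    have hpt : F.pt y = F.pt x := congrArg Subtype.val hxy
    change U ∈ F.pt x
    exact hpt ▸ hy
  · exact fun hx => ⟨x, hx, rfl⟩

theorem ptQuotient_iso_dual_dual (F : Framework) : F.ptQuotient.Iso F.dual.dual := by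
  rw [ptQuotient_eq_quotient_ker]
  let e := Setoid.quotientKerEquivRange F.pt
  refine ⟨e, e.bijective, ?_⟩
  have he : ∀ U : F.pi, e '' (Quotient.mk _ '' U) = F.dual.pt U := fun U => by
    rw [Set.image_image]
    exact F.image_rangeFactorization_pt U
  ext S
  constructor
  · rintro ⟨_, ⟨U, hU, rfl⟩, rfl⟩
    exact ⟨⟨U, hU⟩, (he ⟨U, hU⟩).symm⟩
  · rintro ⟨U, rfl⟩
    exact ⟨_, ⟨U.1, U.2, rfl⟩, he U⟩

end Framework

/-- The double dual of a framework is isomorphic to its quotient by the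
equivalence identifying places contained in the same framology members. -/
theorem double_dual_iso_quotient (F : Framework) :
    F.dual.dual.Iso F.ptQuotient :=
  F.ptQuotient_iso_dual_dual.symm
end

section
/- Let (P,⊑,≺) be a causal site, let π be the family of all maximal centered subsets of P, and let (X,τ) be the topological space with X = π and closed subbase {π(x) : x ∈ P}, where π(x) = {U ∈ π : x ∈ U}. Then (X,τ) is compact. -/
open Set

/-- A causal site of Christensen and Crane: a set of regions with a partial
order `⊑` (here `≤`) having binary suprema and a least element `⊥`, and a
relation `≺` (here `prec`) which is a strict partial order on `P ∖ {⊥}`,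
satisfying the Christensen–Crane axioms. -/
structure IsCausalSite (P : Type*) [SemilatticeSup P] [OrderBot P]
    (prec : P → P → Prop) : Prop where
  prec_irrefl : ∀ a : P, a ≠ ⊥ → ¬ prec a a
  prec_trans : ∀ a b c : P, a ≠ ⊥ → b ≠ ⊥ → c ≠ ⊥ → prec a b → prec b c → prec a c
  ax1 : ∀ a b c : P, b ≤ a → prec a c → prec b c
  ax2 : ∀ a b c : P, b ≤ a → prec c a → prec c b
  ax3 : ∀ a b c : P, prec a c → prec b c → prec (a ⊔ b) c
  ax4 : ∀ a b : P, ∃ ba : P, prec ba a ∧ ba ≤ b ∧ ∀ c : P, prec c a → c ≤ b → c ≤ ba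

/-- A subset `F` is centered if every finite subset of `F` has a common lower
bound different from `⊥`. -/
def Centered {P : Type*} [SemilatticeSup P] [OrderBot P] (F : Set P) : Prop :=
  ∀ s : Finset P, ↑s ⊆ F → ∃ y : P, y ≠ ⊥ ∧ ∀ x ∈ s, y ≤ x

/-- The set of maximal centered subsets of `P`. -/
def maxCentered (P : Type*) [SemilatticeSup P] [OrderBot P] : Set (Set P) :=
  {M | Centered M ∧ ∀ N : Set P, Centered N → M ⊆ N → N = M}

/-- The topology on the set of maximal centered subsets, generated by declaring
the sets `π(x) = {U | x ∈ U}`, for `x ∈ P`, a subbase for the closed sets. -/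
def causalTopology (P : Type*) [SemilatticeSup P] [OrderBot P] :
    TopologicalSpace (maxCentered P) :=
  TopologicalSpace.generateFrom
    {V : Set (maxCentered P) | ∃ x : P, V = {U : maxCentered P | x ∈ (U : Set P)}ᶜ}

/-
Let `F` be an ultrafilter on the space of maximal centered sets. The regions `x`
whose closed set `π(x)` belongs to `F` form a centered set, since finitely many members of `F`
have a common point `U`, and a centered set `U` bounds them from below away from `⊥`. By Zorn's
lemma this set extends to a maximal centered set `M`. Every subbasic open set `π(x)ᶜ` around
`M` has `x ∉ M`, so `π(x) ∉ F` and hence `π(x)ᶜ ∈ F`: the ultrafilter converges to `M`.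
-/

namespace Centered

variable {P : Type*} [SemilatticeSup P] [OrderBot P]

theorem sUnion_of_isChain {c : Set (Set P)} (hc : ∀ N ∈ c, Centered N)
    (hchain : IsChain (· ⊆ ·) c) (hne : c.Nonempty) : Centered (⋃₀ c) := by
  intro s hs
  obtain ⟨N, hNc, hsN⟩ := hchain.directedOn.exists_mem_subset_of_finite_of_subset_sUnion hne
    s.finite_toSet hs
  exact hc N hNc s hsN

theorem exists_maxCentered_superset {A : Set P} (hA : Centered A) :
    ∃ M ∈ maxCentered P, A ⊆ M := by
  obtain ⟨M, hAM, hM⟩ := zorn_subset_nonempty {N : Set P | Centered N}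
    (fun c hc hchain hne => ⟨⋃₀ c, sUnion_of_isChain hc hchain hne,
      fun _ => subset_sUnion_of_mem⟩) A hA
  exact ⟨M, ⟨hM.prop, fun N hN hMN => (hM.eq_of_le hN hMN).symm⟩, hAM⟩

theorem setOf_mem_filter (F : Filter (maxCentered P)) [F.NeBot] :
    Centered {x : P | {U : maxCentered P | x ∈ (U : Set P)} ∈ F} := by
  intro s hs
  have hmem : ⋂ x ∈ s, {U : maxCentered P | x ∈ (U : Set P)} ∈ F :=
    (Filter.biInter_finset_mem s).mpr fun x hx => hs hx
  obtain ⟨U, hU⟩ := Filter.nonempty_of_mem hmem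
  exact U.2.1 s fun x hx => mem_iInter₂.mp hU x hx

end Centered

theorem causalTopology_le_nhds {P : Type*} [SemilatticeSup P] [OrderBot P]
    {F : Filter (maxCentered P)} {M : maxCentered P}
    (hF : ∀ x ∉ (M : Set P), {U : maxCentered P | x ∈ (U : Set P)}ᶜ ∈ F) :
    F ≤ @nhds _ (causalTopology P) M := by
  rw [causalTopology, TopologicalSpace.nhds_generateFrom]
  refine le_iInf₂ ?_
  rintro _ ⟨hMV, x, rfl⟩
  exact Filter.le_principal_iff.mpr (hF x hMV)

theorem causalTopology_compact_general {P : Type*} [SemilatticeSup P] [OrderBot P] :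
    @CompactSpace (maxCentered P) (causalTopology P) := by
  let _ := causalTopology P
  rw [← isCompact_univ_iff, isCompact_iff_ultrafilter_le_nhds]
  intro F _
  obtain ⟨M, hM, hAM⟩ :=
    Centered.exists_maxCentered_superset (Centered.setOf_mem_filter F.toFilter)
  refine ⟨⟨M, hM⟩, mem_univ _, causalTopology_le_nhds fun x hxM => ?_⟩
  exact F.compl_mem_iff_notMem.mpr fun hxA => hxM (hAM hxA)

/-- The topological space associated to a causal site is compact. -/
theorem causalTopology_compact {P : Type*} [SemilatticeSup P] [OrderBot P]
    (prec : P → P → Prop) (h : IsCausalSite P prec) :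
    @CompactSpace (maxCentered P) (causalTopology P) :=
  causalTopology_compact_general
end

section
/- Let (P,⊑,≺) be a causal site, π the family of all maximal centered subsets of P, and (X,τ) the space with X = π and closed subbase {π(x) : x ∈ P}. Then (X,τ) is T1. -/
open Set

/-! Distinct maximal centered families are incomparable, so each contains a point `x` missing
from the other, and the basic open set `π(x)ᶜ` separates them. -/

open Topology

section

variable {P : Type*} [SemilatticeSup P] [OrderBot P]

theorem maxCentered.eq_of_subset {M N : maxCentered P} (hMN : (M : Set P) ⊆ N) : M = N :=
  (Subtype.ext (M.2.2 N N.2.1 hMN)).symm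

theorem maxCentered.exists_mem_notMem_of_ne {M N : maxCentered P} (hMN : M ≠ N) :
    ∃ x ∈ (N : Set P), x ∉ (M : Set P) :=
  not_subset.mp fun hNM => hMN (maxCentered.eq_of_subset hNM).symm

theorem causalTopology_isOpen_compl_setOf_mem (x : P) :
    IsOpen[causalTopology P] {U : maxCentered P | x ∈ (U : Set P)}ᶜ :=
  TopologicalSpace.GenerateOpen.basic _ ⟨x, rfl⟩

end

theorem causalTopology_t1_general {P : Type*} [SemilatticeSup P] [OrderBot P] :
    @T1Space (maxCentered P) (causalTopology P) := by
  let _ := causalTopology P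
  rw [t1Space_iff_exists_open]
  intro M N hMN
  obtain ⟨x, hxN, hxM⟩ := maxCentered.exists_mem_notMem_of_ne hMN
  exact ⟨{U | x ∈ (U : Set P)}ᶜ, causalTopology_isOpen_compl_setOf_mem x, hxM, not_not_intro hxN⟩

/-- The topological space associated to a causal site is T1. -/
theorem causalTopology_t1 {P : Type*} [SemilatticeSup P] [OrderBot P]
    (prec : P → P → Prop) (h : IsCausalSite P prec) :
    @T1Space (maxCentered P) (causalTopology P) :=
  causalTopology_t1_general
end

section
/- Let M = ℝ⁴ be Minkowski space and let P be the lattice of sets generated under finite unions and finite intersections by the closed diamonds ◇(p,q) = J⁺(p) ∩ J⁻(q) with p, q ∈ ℚ⁴, p ≤ q. Then P is a closed base for the co-compact (de Groot dual) topology of the Euclidean topology on M: every Euclidean-compact set K ⊆ M and every point x ∉ K can be separated by a finite union of rational diamonds containing K and missing x. -/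
open Set

/-- Minkowski space: `ℝ⁴` with coordinates indexed by `Fin 4`. -/
abbrev Mink : Type := Fin 4 → ℝ

/-- The Minkowski quadratic form of signature `(1, -1, -1, -1)`. -/
def eta (v : Mink) : ℝ := v 0 ^ 2 - v 1 ^ 2 - v 2 ^ 2 - v 3 ^ 2

/-- The causal order: `p ≤ q` iff `q - p` is non-past-oriented and non-spacelike. -/
def causalLe (p q : Mink) : Prop := 0 ≤ (q - p) 0 ∧ 0 ≤ eta (q - p)

/-- The causal future of a point. -/
def Jplus (p : Mink) : Set Mink := {x | causalLe p x}

/-- The causal past of a point. -/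
def Jminus (q : Mink) : Set Mink := {x | causalLe x q}

/-- The closed diamond determined by two points. -/
def Diamond (p q : Mink) : Set Mink := Jplus p ∩ Jminus q

/-- A point of `ℝ⁴` has rational coordinates. -/
def IsRationalPoint (p : Mink) : Prop := ∀ j : Fin 4, ∃ a : ℚ, p j = (a : ℝ)

/-!
A diamond lies in the sup-norm ball about its lower tip whose radius is its time extent, so a
small diamond around `y ≠ x` misses `x`. The pairs of tips for which this works and `y` is in the
open diamond form a nonempty open set, hence contain a rational pair. Compactness of `K` then
leaves finitely many.
-/

open Metric

def chronoLt (p q : Mink) : Prop := 0 < (q - p) 0 ∧ 0 < eta (q - p)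

lemma causalLe_of_chronoLt {p q : Mink} (h : chronoLt p q) : causalLe p q := ⟨h.1.le, h.2.le⟩

lemma continuous_eta : Continuous eta := by
  unfold eta
  fun_prop

lemma isOpen_setOf_chronoLt {X : Type*} [TopologicalSpace X] {f g : X → Mink}
    (hf : Continuous f) (hg : Continuous g) : IsOpen {z | chronoLt (f z) (g z)} :=
  (isOpen_lt continuous_const ((continuous_apply 0).comp (hg.sub hf))).inter
    (isOpen_lt continuous_const (continuous_eta.comp (hg.sub hf)))

lemma chronoLt_of_sub_eq_single {p q : Mink} {t : ℝ} (h : q - p = Pi.single 0 t) (ht : 0 < t) :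
    chronoLt p q := by
  rw [chronoLt, h]
  simp [eta, ht]

lemma mem_interior_diamond {p y q : Mink} (hp : chronoLt p y) (hq : chronoLt y q) :
    y ∈ interior (Diamond p q) := by
  have hopen : IsOpen {z | chronoLt p z ∧ chronoLt z q} :=
    (isOpen_setOf_chronoLt continuous_const continuous_id).inter
      (isOpen_setOf_chronoLt continuous_id continuous_const)
  refine interior_maximal (fun z hz => ?_) hopen ⟨hp, hq⟩
  exact ⟨causalLe_of_chronoLt hz.1, causalLe_of_chronoLt hz.2⟩

lemma abs_sub_le_of_causalLe {p z : Mink} (h : causalLe p z) (j : Fin 4) :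
    |z j - p j| ≤ z 0 - p 0 := by
  obtain ⟨h0, hη⟩ := h
  simp only [eta, Pi.sub_apply] at h0 hη
  rw [← sq_le_sq₀ (abs_nonneg _) h0, sq_abs]
  fin_cases j <;> dsimp <;>
    linarith [sq_nonneg (z 1 - p 1), sq_nonneg (z 2 - p 2), sq_nonneg (z 3 - p 3)]

lemma diamond_subset_closedBall (p q : Mink) : Diamond p q ⊆ closedBall p (q 0 - p 0) := by
  rintro z ⟨hpz, hzq⟩
  have hp0 : p 0 ≤ z 0 := by simpa using hpz.1
  have hq0 : z 0 ≤ q 0 := by simpa using hzq.1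
  rw [mem_closedBall, dist_eq_norm, pi_norm_le_iff_of_nonneg (by linarith)]
  intro j
  rw [Pi.sub_apply, Real.norm_eq_abs]
  linarith [abs_sub_le_of_causalLe hpz j]

lemma dense_setOf_isRationalPoint : Dense {p : Mink | IsRationalPoint p} := by
  convert dense_pi univ fun (_ : Fin 4) _ => Rat.denseRange_cast (𝕜 := ℝ)
  simp [IsRationalPoint, Set.pi, eq_comm]

lemma exists_rational_diamond_mem_interior_not_mem {x y : Mink} (hxy : x ≠ y) :
    ∃ p q : Mink, IsRationalPoint p ∧ IsRationalPoint q ∧ chronoLt p q ∧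
      y ∈ interior (Diamond p q) ∧ x ∉ Diamond p q := by
  set S : Set (Mink × Mink) := {pq | chronoLt pq.1 y ∧ chronoLt y pq.2 ∧ chronoLt pq.1 pq.2 ∧
    pq.2 0 - pq.1 0 < dist x pq.1}
  have hS : IsOpen S :=
    (isOpen_setOf_chronoLt continuous_fst continuous_const).inter <|
      (isOpen_setOf_chronoLt continuous_const continuous_snd).inter <|
      (isOpen_setOf_chronoLt continuous_fst continuous_snd).inter <|
      isOpen_lt (f := fun pq : Mink × Mink => pq.2 0 - pq.1 0) (by fun_prop) (by fun_prop)
  set t := dist x y / 4 with ht_def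
  have ht : 0 < t := by have := dist_pos.2 hxy; positivity
  have hyS : (y - Pi.single 0 t, y + Pi.single 0 t) ∈ S := by
    refine ⟨chronoLt_of_sub_eq_single (sub_sub_cancel _ _) ht,
      chronoLt_of_sub_eq_single (add_sub_cancel_left _ _) ht,
      chronoLt_of_sub_eq_single (t := 2 * t) ?_ (by positivity), ?_⟩
    · rw [add_sub_sub_cancel, two_mul, Pi.single_add]
    · have hyp : dist y (y - Pi.single 0 t) = t := by
        rw [dist_self_sub_right, Pi.norm_single, Real.norm_of_nonneg ht.le]
      have := dist_triangle_right x y (y - Pi.single 0 t)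
      simp only [Pi.add_apply, Pi.sub_apply, Pi.single_eq_same]
      linarith
  obtain ⟨⟨p, q⟩, ⟨hp, hq⟩, hpy, hyq, hpq, hxpq⟩ :=
    (dense_setOf_isRationalPoint.prod dense_setOf_isRationalPoint).exists_mem_open hS ⟨_, hyS⟩
  exact ⟨p, q, hp, hq, hpq, mem_interior_diamond hpy hyq,
    fun hx => (mem_closedBall.1 (diamond_subset_closedBall p q hx)).not_gt hxpq⟩

lemma IsCompact.exists_fin_subcover {X ι : Type*} [TopologicalSpace X] {K : Set X}
    (hK : IsCompact K) {P : ι → Prop} {U : ι → Set X} (hU : ∀ i, IsOpen (U i))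
    (hcover : ∀ y ∈ K, ∃ i, P i ∧ y ∈ U i) :
    ∃ (n : ℕ) (f : Fin n → ι), (∀ k, P (f k)) ∧ K ⊆ ⋃ k, U (f k) := by
  obtain ⟨s, hs⟩ := hK.elim_finite_subcover (fun i : {i // P i} => U i) (fun i => hU i)
    fun y hy => by obtain ⟨i, hi, hy⟩ := hcover y hy; exact mem_iUnion.2 ⟨⟨i, hi⟩, hy⟩
  refine ⟨s.card, fun k => (s.equivFin.symm k).1, fun k => (s.equivFin.symm k).1.2, ?_⟩
  intro y hy
  obtain ⟨i, his, hyi⟩ := mem_iUnion₂.1 (hs hy)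
  exact mem_iUnion.2 ⟨s.equivFin ⟨i, his⟩, by simpa using hyi⟩

/-- Rational closed diamonds form a closed base for the co-compact topology:
for every Euclidean-compact set `K` and every `x ∉ K` there are finitely many
rational diamonds whose interiors cover `K` and whose union misses `x`. -/
theorem rational_diamonds_closed_base (K : Set Mink) (hK : IsCompact K)
    (x : Mink) (hx : x ∉ K) :
    ∃ (n : ℕ) (p q : Fin n → Mink),
      (∀ i, IsRationalPoint (p i) ∧ IsRationalPoint (q i) ∧ causalLe (p i) (q i)) ∧
      K ⊆ ⋃ i, interior (Diamond (p i) (q i)) ∧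
      x ∉ ⋃ i, Diamond (p i) (q i) := by
  obtain ⟨n, f, hf, hKf⟩ := hK.exists_fin_subcover
    (P := fun pq : Mink × Mink => IsRationalPoint pq.1 ∧ IsRationalPoint pq.2 ∧
      causalLe pq.1 pq.2 ∧ x ∉ Diamond pq.1 pq.2)
    (U := fun pq => interior (Diamond pq.1 pq.2)) (fun _ => isOpen_interior) fun y hy => by
      obtain ⟨p, q, hp, hq, hpq, hy, hx⟩ :=
        exists_rational_diamond_mem_interior_not_mem (ne_of_mem_of_not_mem hy hx).symm
      exact ⟨(p, q), ⟨hp, hq, causalLe_of_chronoLt hpq, hx⟩, hy⟩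
  refine ⟨n, fun k => (f k).1, fun k => (f k).2,
    fun k => ⟨(hf k).1, (hf k).2.1, (hf k).2.2.1⟩, hKf, ?_⟩
  simpa using fun k => (hf k).2.2.2
end
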